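/- arXiv:1204.2042 — 5 statements merged into one kernel-verified Lean document; each statement's English description precedes it below -/
import Mathlib

section
/- Let q be a primitive nth root of unity in ℂ with n ≥ 2. In the ℂ-algebra H generated by D₁, D₂, σ, σ⁻¹ subject to D₁D₂ = D₂D₁, qσDᵢ = Dᵢσ (i = 1,2), and σσ⁻¹ = σ⁻¹σ = 1, the two-sided ideal I generated by D₁ⁿ and D₂ⁿ is a Hopf ideal with respect to the Hopf structure where Δ(D₁) = D₁⊗σ + 1⊗D₁, Δ(D₂) = D₂⊗1 + σ⊗D₂, Δ(σ) = σ⊗σ; that is, Δ(I) ⊆ I⊗H + H⊗I, ε(I) = 0, and S(I) ⊆ I. -/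
/-!
The two summands of `Δ D₁ = D₁ ⊗ σ + 1 ⊗ D₁` `q`-commute, because `D₁ σ = q σ D₁`, so `Δ(D₁ⁿ)`
expands by the `q`-binomial theorem. At a primitive `n`th root of unity every Gaussian binomial
`[n choose k]_q` with `0 < k < n` vanishes (the `q`-factorial `[n]_q!` does, while `[k]_q!` and
`[n - k]_q!` do not), leaving `Δ(D₁ⁿ) = D₁ⁿ ⊗ σⁿ + 1 ⊗ D₁ⁿ`; likewise for `D₂`. Moreover
`ε(Dᵢⁿ) = 0`, and `S(Dᵢⁿ) = S(Dᵢ)ⁿ` is a scalar multiple of `Dᵢⁿ σ⁻ⁿ` or `σ⁻ⁿ Dᵢⁿ`. As `Δ`, `ε`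
are multiplicative and `S` is antimultiplicative, these properties of the generators pass to the
two-sided ideal they generate.
-/

open Finset TensorProduct Coalgebra HopfAlgebra Submodule
open scoped Pointwise

section QBinomial

variable {K : Type*} [CommSemiring K] (q : K)

def qNat (m : ℕ) : K := ∑ i ∈ range m, q ^ i

lemma qNat_add (a b : ℕ) : qNat q (a + b) = qNat q a + q ^ a * qNat q b := by
  simp only [qNat, sum_range_add, mul_sum, pow_add]

def qFactorial : ℕ → K
  | 0 => 1
  | m + 1 => qFactorial m * qNat q (m + 1)

lemma qFactorial_succ (m : ℕ) : qFactorial q (m + 1) = qFactorial q m * qNat q (m + 1) := rfl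

def qBinomial : ℕ → ℕ → K
  | _, 0 => 1
  | 0, _ + 1 => 0
  | m + 1, k + 1 => qBinomial m k + q ^ (k + 1) * qBinomial m (k + 1)

@[simp] lemma qBinomial_zero_right (m : ℕ) : qBinomial q m 0 = 1 := by
  cases m <;> rfl

lemma qBinomial_succ_succ (m k : ℕ) :
    qBinomial q (m + 1) (k + 1) = qBinomial q m k + q ^ (k + 1) * qBinomial q m (k + 1) := rfl

lemma qBinomial_eq_zero_of_lt : ∀ {m k : ℕ}, m < k → qBinomial q m k = 0
  | 0, k + 1, _ => rfl
  | m + 1, k + 1, h => by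
    rw [qBinomial_succ_succ, qBinomial_eq_zero_of_lt (by omega),
      qBinomial_eq_zero_of_lt (by omega), mul_zero, add_zero]

@[simp] lemma qBinomial_self : ∀ m : ℕ, qBinomial q m m = 1
  | 0 => rfl
  | m + 1 => by
    rw [qBinomial_succ_succ, qBinomial_self m, qBinomial_eq_zero_of_lt q (by omega), mul_zero,
      add_zero]

theorem qFactorial_mul_qFactorial_mul_qBinomial :
    ∀ k j : ℕ, qFactorial q k * qFactorial q j * qBinomial q (k + j) k = qFactorial q (k + j)
  | 0, j => by simp [qFactorial]
  | k + 1, 0 => by simp [qFactorial]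
  | k + 1, j + 1 => by
    have h₁ := qFactorial_mul_qFactorial_mul_qBinomial k (j + 1)
    have h₂ := qFactorial_mul_qFactorial_mul_qBinomial (k + 1) j
    rw [show k + 1 + j = k + (j + 1) by omega] at h₂
    rw [show k + 1 + (j + 1) = k + (j + 1) + 1 by omega, qBinomial_succ_succ,
      qFactorial_succ q (k + (j + 1))]
    calc _ = qNat q (k + 1) *
            (qFactorial q k * qFactorial q (j + 1) * qBinomial q (k + (j + 1)) k) +
          q ^ (k + 1) * qNat q (j + 1) *
            (qFactorial q (k + 1) * qFactorial q j * qBinomial q (k + (j + 1)) (k + 1)) := by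
          simp only [qFactorial_succ]; ring
      _ = qFactorial q (k + (j + 1)) * qNat q (k + (j + 1) + 1) := by
          rw [h₁, h₂, show k + (j + 1) + 1 = (k + 1) + (j + 1) by omega,
            qNat_add q (k + 1) (j + 1)]
          ring

end QBinomial

section RootOfUnity

variable {K : Type*} [CommRing K] {q : K} {n : ℕ}

lemma IsPrimitiveRoot.qNat_ne_zero (hq : IsPrimitiveRoot q n) {m : ℕ} (h0 : m ≠ 0)
    (hm : m < n) : qNat q m ≠ 0 := by
  intro h
  have := geom_sum_mul q m
  rw [← qNat, h, zero_mul, eq_comm, sub_eq_zero] at this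
  exact hq.pow_ne_one_of_pos_of_lt h0 hm this

variable [IsDomain K]

lemma IsPrimitiveRoot.qNat_eq_zero (hq : IsPrimitiveRoot q n) (hn : 1 < n) : qNat q n = 0 := by
  have := geom_sum_mul q n
  rw [← qNat, hq.pow_eq_one, sub_self] at this
  exact (mul_eq_zero.mp this).resolve_right (sub_ne_zero.mpr (hq.ne_one hn))

lemma IsPrimitiveRoot.qFactorial_ne_zero (hq : IsPrimitiveRoot q n) :
    ∀ {m : ℕ}, m < n → qFactorial q m ≠ 0
  | 0, _ => one_ne_zero
  | m + 1, hm => mul_ne_zero (hq.qFactorial_ne_zero (by omega)) (hq.qNat_ne_zero m.succ_ne_zero hm)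

lemma IsPrimitiveRoot.qBinomial_eq_zero (hq : IsPrimitiveRoot q n) {k : ℕ} (h0 : k ≠ 0)
    (hk : k < n) : qBinomial q n k = 0 := by
  obtain ⟨j, rfl⟩ := Nat.exists_eq_add_of_lt hk
  have h := qFactorial_mul_qFactorial_mul_qBinomial q k (j + 1)
  rw [show k + (j + 1) = k + j + 1 by omega, qFactorial_succ q (k + j), hq.qNat_eq_zero (by omega),
    mul_zero] at h
  refine (mul_eq_zero.mp h).resolve_left (mul_ne_zero (hq.qFactorial_ne_zero hk) ?_)
  exact hq.qFactorial_ne_zero (by omega)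

end RootOfUnity

section QCommute

variable {K T : Type*} [CommSemiring K] [Semiring T] [Algebra K T] {q : K} {A B : T}

lemma mul_pow_eq_smul_pow_mul (h : B * A = q • (A * B)) (m : ℕ) :
    B * A ^ m = q ^ m • (A ^ m * B) := by
  induction m with
  | zero => simp
  | succ m ih =>
    rw [pow_succ, ← mul_assoc, ih, smul_mul_assoc, mul_assoc, h, mul_smul_comm, smul_smul,
      ← mul_assoc, ← pow_succ, ← pow_succ]

lemma pow_mul_eq_smul_mul_pow (h : B * A = q • (A * B)) (m : ℕ) :
    B ^ m * A = q ^ m • (A * B ^ m) := by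
  induction m with
  | zero => simp
  | succ m ih =>
    rw [pow_succ', mul_assoc, ih, mul_smul_comm, ← mul_assoc, h, smul_mul_assoc, smul_smul,
      mul_assoc, ← pow_succ', ← pow_succ]

lemma mul_pow_eq_smul_pow_mul_pow (h : B * A = q • (A * B)) (m : ℕ) :
    (A * B) ^ m = q ^ m.choose 2 • (A ^ m * B ^ m) := by
  induction m with
  | zero => simp
  | succ m ih =>
    rw [pow_succ, ih, smul_mul_assoc, mul_assoc, ← mul_assoc (B ^ m), pow_mul_eq_smul_mul_pow h,
      smul_mul_assoc, mul_smul_comm, smul_smul, ← pow_add, Nat.choose_succ_succ',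
      Nat.choose_one_right, add_comm m, ← mul_assoc, ← mul_assoc, ← pow_succ, mul_assoc, ← pow_succ]

theorem add_pow_eq_sum_qBinomial (h : B * A = q • (A * B)) (m : ℕ) :
    (A + B) ^ m = ∑ k ∈ range (m + 1), qBinomial q m k • (A ^ k * B ^ (m - k)) := by
  induction m with
  | zero => simp
  | succ m ih =>
    set M : ℕ → T := fun k => A ^ (k + 1) * B ^ (m - k)
    have hA : ∑ k ∈ range (m + 1), A * (qBinomial q m k • (A ^ k * B ^ (m - k))) =
        ∑ k ∈ range (m + 1), qBinomial q m k • M k :=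
      sum_congr rfl fun k _ => by rw [mul_smul_comm, ← mul_assoc, ← pow_succ']
    have hB : ∑ k ∈ range (m + 1), B * (qBinomial q m k • (A ^ k * B ^ (m - k))) =
        ∑ k ∈ range (m + 1), (q ^ (k + 1) * qBinomial q m (k + 1)) • M k + B ^ (m + 1) := by
      rw [sum_range_succ', sum_range_succ, qBinomial_eq_zero_of_lt q m.lt_succ_self, mul_zero,
        zero_smul, add_zero]
      congr 1
      · refine sum_congr rfl fun k hk => ?_
        rw [mul_smul_comm, ← mul_assoc, mul_pow_eq_smul_pow_mul h, smul_mul_assoc, smul_smul,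
          mul_assoc, ← pow_succ', show m - (k + 1) + 1 = m - k by grind, mul_comm]
      · simp [pow_succ']
    rw [sum_range_succ' _ (m + 1), pow_succ', add_mul, ih, mul_sum, mul_sum, hA, hB]
    simp only [qBinomial_succ_succ, add_smul, sum_add_distrib, Nat.add_sub_add_right,
      qBinomial_zero_right, pow_zero, one_mul, one_smul, Nat.sub_zero, M]
    abel

lemma mul_eq_smul_mul_of_smul_mul_eq {s t : T} (hs : q • (s * A) = A * s) (hst : s * t = 1)
    (hts : t * s = 1) : t * A = q • (A * t) :=
  calc t * A = t * (A * s) * t := by rw [mul_assoc, mul_assoc, hst, mul_one]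
    _ = q • (A * t) := by rw [← hs, mul_smul_comm, smul_mul_assoc, ← mul_assoc, hts, one_mul]

end QCommute

theorem IsPrimitiveRoot.add_pow_eq_pow_add_pow {K T : Type*} [CommRing K] [IsDomain K] [Semiring T]
    [Algebra K T] {q : K} {n : ℕ} (hq : IsPrimitiveRoot q n) (hn : n ≠ 0) {A B : T}
    (h : B * A = q • (A * B)) : (A + B) ^ n = A ^ n + B ^ n := by
  rw [add_pow_eq_sum_qBinomial h, sum_range_succ,
    sum_eq_single_of_mem 0 (mem_range.2 (Nat.pos_of_ne_zero hn)) fun k hk hk0 => by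
      rw [hq.qBinomial_eq_zero hk0 (mem_range.1 hk), zero_smul]]
  simp [add_comm]

section TwoSidedSpan

variable {R A : Type*} [CommSemiring R] [Semiring A] [Algebra R A]

lemma mul_mul_mem_span_of_subset {G U : Set A} (hG : span R G = ⊤) (hU : G * U * G ⊆ U)
    {x : A} (hx : x ∈ span R U) (a b : A) : a * x * b ∈ span R U := by
  have : (⊤ : Submodule R A) * span R U * ⊤ ≤ span R U := by
    rw [← hG, span_mul_span, span_mul_span]
    exact span_mono hU
  exact this (mul_mem_mul (mul_mem_mul mem_top hx) mem_top)

variable (R) in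
def twoSidedSpan (X : Set A) : Submodule R A :=
  span R {y | ∃ a b : A, ∃ x ∈ X, y = a * x * b}

lemma subset_twoSidedSpan {X : Set A} : X ⊆ twoSidedSpan R X :=
  fun x hx => subset_span ⟨1, 1, x, hx, by rw [one_mul, mul_one]⟩

lemma mul_mul_mem_twoSidedSpan {X : Set A} {y : A} (hy : y ∈ twoSidedSpan R X) (a b : A) :
    a * y * b ∈ twoSidedSpan R X := by
  refine mul_mul_mem_span_of_subset span_univ ?_ hy a b
  rintro _ ⟨_, ⟨a, -, _, ⟨c, d, x, hx, rfl⟩, rfl⟩, b, -, rfl⟩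
  exact ⟨a * c, d * b, x, hx, by noncomm_ring⟩

-- `I ⊗ A + A ⊗ I`, as the span of its pure tensors
def tensorSup (I : Submodule R A) : Submodule R (A ⊗[R] A) :=
  span R ({z | ∃ a ∈ I, ∃ b : A, z = a ⊗ₜ[R] b} ∪ {z | ∃ a : A, ∃ b ∈ I, z = a ⊗ₜ[R] b})

variable {I : Submodule R A}

lemma tmul_mem_tensorSup_left {a : A} (ha : a ∈ I) (b : A) : a ⊗ₜ[R] b ∈ tensorSup I :=
  subset_span (Or.inl ⟨a, ha, b, rfl⟩)

lemma tmul_mem_tensorSup_right (a : A) {b : A} (hb : b ∈ I) : a ⊗ₜ[R] b ∈ tensorSup I :=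
  subset_span (Or.inr ⟨a, b, hb, rfl⟩)

lemma mul_mul_mem_tensorSup (hI : ∀ {x : A}, x ∈ I → ∀ a b : A, a * x * b ∈ I)
    {z : A ⊗[R] A} (hz : z ∈ tensorSup I) (u v : A ⊗[R] A) : u * z * v ∈ tensorSup I := by
  refine mul_mul_mem_span_of_subset (span_tmul_eq_top R A A) ?_ hz u v
  rintro _ ⟨_, ⟨_, ⟨a, b, rfl⟩, _, hz, rfl⟩, _, ⟨c, d, rfl⟩, rfl⟩
  rcases hz with ⟨x, hx, y, rfl⟩ | ⟨x, y, hy, rfl⟩ <;>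
    simp only [Algebra.TensorProduct.tmul_mul_tmul]
  · exact Or.inl ⟨_, hI hx a c, _, rfl⟩
  · exact Or.inr ⟨_, _, hI hy b d, rfl⟩

end TwoSidedSpan

lemma neg_mul_pow_mem_twoSidedSpan {R A : Type*} [CommSemiring R] [Ring A] [Algebra R A]
    {X : Set A} {x y : A} {c : R} (h : y * x = c • (x * y)) {m : ℕ} (hm : x ^ m ∈ X ∨ y ^ m ∈ X) :
    (-(x * y)) ^ m ∈ twoSidedSpan R X := by
  rw [neg_pow, mul_pow_eq_smul_pow_mul_pow h, mul_smul_comm]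
  refine smul_mem _ _ ?_
  rcases hm with hx | hy
  · simpa [mul_assoc] using mul_mul_mem_twoSidedSpan (subset_twoSidedSpan hx) ((-1) ^ m) (y ^ m)
  · simpa [mul_assoc] using
      mul_mul_mem_twoSidedSpan (subset_twoSidedSpan hy) ((-1) ^ m * x ^ m) 1

section Hopf

variable {R A : Type*} [CommSemiring R] [Semiring A] {X : Set A} {y : A}

lemma comul_mem_tensorSup_of_mem_twoSidedSpan [Bialgebra R A]
    (hX : ∀ x ∈ X, comul x ∈ tensorSup (twoSidedSpan R X)) (hy : y ∈ twoSidedSpan R X) :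
    comul y ∈ tensorSup (twoSidedSpan R X) := by
  refine (span_le (p := (tensorSup (twoSidedSpan R X)).comap comul).2 ?_) hy
  rintro _ ⟨a, b, x, hx, rfl⟩
  simp only [SetLike.mem_coe, mem_comap, Bialgebra.comul_mul]
  exact mul_mul_mem_tensorSup (mul_mul_mem_twoSidedSpan ·) (hX x hx) _ _

lemma counit_eq_zero_of_mem_twoSidedSpan [Bialgebra R A] (hX : ∀ x ∈ X, counit (R := R) x = 0)
    (hy : y ∈ twoSidedSpan R X) : counit (R := R) y = 0 := by
  refine (span_le (p := LinearMap.ker (counit (R := R) (A := A)))).2 ?_ hy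
  rintro _ ⟨a, b, x, hx, rfl⟩
  simp [Bialgebra.counit_mul, hX x hx]

lemma antipode_mem_twoSidedSpan [HopfAlgebra R A] (hX : ∀ x ∈ X, antipode R x ∈ twoSidedSpan R X)
    (hy : y ∈ twoSidedSpan R X) : antipode R y ∈ twoSidedSpan R X := by
  refine (span_le (p := (twoSidedSpan R X).comap (antipode R))).2 ?_ hy
  rintro _ ⟨a, b, x, hx, rfl⟩
  simp only [SetLike.mem_coe, mem_comap, antipode_mul_antidistrib, ← mul_assoc]
  exact mul_mul_mem_twoSidedSpan (hX x hx) _ _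

lemma antipode_pow [HopfAlgebra R A] (x : A) (m : ℕ) :
    antipode R (x ^ m) = antipode R x ^ m := by
  simpa using congrArg MulOpposite.unop (map_pow (antipodeAlgHomOp R A) x m)

end Hopf

section SkewPrimitive

variable {K A : Type*} [CommRing K] [IsDomain K] [Semiring A] [Bialgebra K A] {q : K} {n : ℕ}
  {x g : A}

theorem IsPrimitiveRoot.comul_pow_of_comul_eq_tmul_add_one_tmul (hq : IsPrimitiveRoot q n)
    (hn : n ≠ 0) (hgx : q • (g * x) = x * g) (hx : comul (R := K) x = x ⊗ₜ[K] g + 1 ⊗ₜ[K] x) :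
    comul (R := K) (x ^ n) = (x ^ n) ⊗ₜ[K] (g ^ n) + 1 ⊗ₜ[K] (x ^ n) := by
  have h : (1 ⊗ₜ[K] x) * (x ⊗ₜ[K] g) = q • ((x ⊗ₜ[K] g) * (1 ⊗ₜ[K] x)) := by
    simp only [Algebra.TensorProduct.tmul_mul_tmul, one_mul, mul_one, ← hgx, tmul_smul]
  rw [Bialgebra.comul_pow, hx, hq.add_pow_eq_pow_add_pow hn h, Algebra.TensorProduct.tmul_pow,
    Algebra.TensorProduct.tmul_pow, one_pow]

theorem IsPrimitiveRoot.comul_pow_of_comul_eq_tmul_one_add_tmul (hq : IsPrimitiveRoot q n)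
    (hn : n ≠ 0) (hgx : q • (g * x) = x * g) (hx : comul (R := K) x = x ⊗ₜ[K] 1 + g ⊗ₜ[K] x) :
    comul (R := K) (x ^ n) = (x ^ n) ⊗ₜ[K] 1 + (g ^ n) ⊗ₜ[K] (x ^ n) := by
  have h : (x ⊗ₜ[K] 1) * (g ⊗ₜ[K] x) = q • ((g ⊗ₜ[K] x) * (x ⊗ₜ[K] 1)) := by
    simp only [Algebra.TensorProduct.tmul_mul_tmul, one_mul, mul_one, ← hgx, smul_tmul']
  rw [Bialgebra.comul_pow, hx, add_comm, hq.add_pow_eq_pow_add_pow hn h,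
    Algebra.TensorProduct.tmul_pow, Algebra.TensorProduct.tmul_pow, one_pow, add_comm]

end SkewPrimitive

theorem hopf_ideal_of_truncation_general
    (n : ℕ) (hn : 2 ≤ n) (q : ℂ) (hq : IsPrimitiveRoot q n)
    (H : Type*) [Ring H] [HopfAlgebra ℂ H]
    (D₁ D₂ s sinv : H)
    (hs1 : q • (s * D₁) = D₁ * s)
    (hs2 : q • (s * D₂) = D₂ * s)
    (hsinv : s * sinv = 1) (hsinv' : sinv * s = 1)
    (hΔ1 : Coalgebra.comul (R := ℂ) D₁ = D₁ ⊗ₜ[ℂ] s + 1 ⊗ₜ[ℂ] D₁)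
    (hΔ2 : Coalgebra.comul (R := ℂ) D₂ = D₂ ⊗ₜ[ℂ] 1 + s ⊗ₜ[ℂ] D₂)
    (hε1 : Coalgebra.counit (R := ℂ) D₁ = 0)
    (hε2 : Coalgebra.counit (R := ℂ) D₂ = 0)
    (hS1 : HopfAlgebra.antipode (R := ℂ) D₁ = -(D₁ * sinv))
    (hS2 : HopfAlgebra.antipode (R := ℂ) D₂ = -(sinv * D₂))
    -- `I` is the two-sided ideal generated by `D₁ⁿ` and `D₂ⁿ`:
    (I : Submodule ℂ H)
    (hI : I = Submodule.span ℂ {x : H | ∃ a b : H, x = a * D₁ ^ n * b ∨ x = a * D₂ ^ n * b}) :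
    (∀ x ∈ I, Coalgebra.comul (R := ℂ) x ∈
      Submodule.span ℂ ({z : H ⊗[ℂ] H | ∃ a ∈ I, ∃ b : H, z = a ⊗ₜ[ℂ] b} ∪
        {z : H ⊗[ℂ] H | ∃ a : H, ∃ b ∈ I, z = a ⊗ₜ[ℂ] b})) ∧
    (∀ x ∈ I, Coalgebra.counit (R := ℂ) x = 0) ∧
    (∀ x ∈ I, HopfAlgebra.antipode (R := ℂ) x ∈ I) := by
  have hn0 : n ≠ 0 := by omega
  obtain rfl : I = twoSidedSpan ℂ {D₁ ^ n, D₂ ^ n} := by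
    rw [hI, twoSidedSpan]
    congr 1
    ext
    simp [or_and_right, exists_or]
  have hD₁ : D₁ ^ n ∈ twoSidedSpan ℂ {D₁ ^ n, D₂ ^ n} := subset_twoSidedSpan (by simp)
  have hD₂ : D₂ ^ n ∈ twoSidedSpan ℂ {D₁ ^ n, D₂ ^ n} := subset_twoSidedSpan (by simp)
  refine ⟨fun x hx => comul_mem_tensorSup_of_mem_twoSidedSpan ?_ hx,
    fun x hx => counit_eq_zero_of_mem_twoSidedSpan ?_ hx,
    fun x hx => antipode_mem_twoSidedSpan ?_ hx⟩
  · rintro _ (rfl | rfl)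
    · rw [hq.comul_pow_of_comul_eq_tmul_add_one_tmul hn0 hs1 hΔ1]
      exact add_mem (tmul_mem_tensorSup_left hD₁ _) (tmul_mem_tensorSup_right _ hD₁)
    · rw [hq.comul_pow_of_comul_eq_tmul_one_add_tmul hn0 hs2 hΔ2]
      exact add_mem (tmul_mem_tensorSup_left hD₂ _) (tmul_mem_tensorSup_right _ hD₂)
  · rintro _ (rfl | rfl) <;> simp [hε1, hε2, hn0]
  · have hc₁ : sinv * D₁ = q • (D₁ * sinv) := mul_eq_smul_mul_of_smul_mul_eq hs1 hsinv hsinv'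
    have hc₂ : D₂ * sinv = q⁻¹ • (sinv * D₂) := by
      rw [mul_eq_smul_mul_of_smul_mul_eq hs2 hsinv hsinv', inv_smul_smul₀ (hq.ne_zero hn0)]
    rintro _ (rfl | rfl)
    · rw [antipode_pow, hS1]
      exact neg_mul_pow_mem_twoSidedSpan hc₁ (Or.inl (by simp))
    · rw [antipode_pow, hS2]
      exact neg_mul_pow_mem_twoSidedSpan hc₂ (Or.inr (by simp))

/-- Let `q` be a primitive `n`th root of unity in `ℂ` with `n ≥ 2`. In the Hopf
algebra `H` generated by `D₁, D₂, σ, σ⁻¹` subject to `D₁D₂ = D₂D₁`, `qσDᵢ = Dᵢσ`,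
`σσ⁻¹ = σ⁻¹σ = 1`, with `Δ(D₁) = D₁⊗σ + 1⊗D₁`, `Δ(D₂) = D₂⊗1 + σ⊗D₂`, `Δ(σ) = σ⊗σ`,
`ε(D₁) = ε(D₂) = 0`, `ε(σ) = 1`, `S(D₁) = −D₁σ⁻¹`, `S(D₂) = −σ⁻¹D₂`, `S(σ) = σ⁻¹`,
the two-sided ideal `I` generated by `D₁ⁿ` and `D₂ⁿ` is a Hopf ideal:
`Δ(I) ⊆ I⊗H + H⊗I`, `ε(I) = 0`, and `S(I) ⊆ I`. -/
theorem hopf_ideal_of_truncation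
    (n : ℕ) (hn : 2 ≤ n) (q : ℂ) (hq : IsPrimitiveRoot q n)
    (H : Type*) [Ring H] [HopfAlgebra ℂ H]
    (D₁ D₂ s sinv : H)
    (hcomm : D₁ * D₂ = D₂ * D₁)
    (hs1 : q • (s * D₁) = D₁ * s)
    (hs2 : q • (s * D₂) = D₂ * s)
    (hsinv : s * sinv = 1) (hsinv' : sinv * s = 1)
    (hΔ1 : Coalgebra.comul (R := ℂ) D₁ = D₁ ⊗ₜ[ℂ] s + 1 ⊗ₜ[ℂ] D₁)
    (hΔ2 : Coalgebra.comul (R := ℂ) D₂ = D₂ ⊗ₜ[ℂ] 1 + s ⊗ₜ[ℂ] D₂)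
    (hΔs : Coalgebra.comul (R := ℂ) s = s ⊗ₜ[ℂ] s)
    (hε1 : Coalgebra.counit (R := ℂ) D₁ = 0)
    (hε2 : Coalgebra.counit (R := ℂ) D₂ = 0)
    (hεs : Coalgebra.counit (R := ℂ) s = 1)
    (hS1 : HopfAlgebra.antipode (R := ℂ) D₁ = -(D₁ * sinv))
    (hS2 : HopfAlgebra.antipode (R := ℂ) D₂ = -(sinv * D₂))
    (hSs : HopfAlgebra.antipode (R := ℂ) s = sinv)
    -- `I` is the two-sided ideal generated by `D₁ⁿ` and `D₂ⁿ`: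
    (I : Submodule ℂ H)
    (hI : I = Submodule.span ℂ {x : H | ∃ a b : H, x = a * D₁ ^ n * b ∨ x = a * D₂ ^ n * b}) :
    (∀ x ∈ I, Coalgebra.comul (R := ℂ) x ∈
      Submodule.span ℂ ({z : H ⊗[ℂ] H | ∃ a ∈ I, ∃ b : H, z = a ⊗ₜ[ℂ] b} ∪
        {z : H ⊗[ℂ] H | ∃ a : H, ∃ b ∈ I, z = a ⊗ₜ[ℂ] b})) ∧
    (∀ x ∈ I, Coalgebra.counit (R := ℂ) x = 0) ∧
    (∀ x ∈ I, HopfAlgebra.antipode (R := ℂ) x ∈ I) :=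
  hopf_ideal_of_truncation_general n hn q hq H D₁ D₂ s sinv hs1 hs2 hsinv hsinv' hΔ1 hΔ2 hε1 hε2 hS1
    hS2 I hI
end

section
/- Let V be a 3-dimensional ℂ-vector space with basis w₁, w₂, w₃ and let q be a primitive nth root of unity (n ≥ 2). Consider the quantum symmetric algebra S_q(V) = T(V)/(w₁w₂ − q w₂w₁, w₁w₃ − q w₃w₁, w₂w₃ − w₃w₂). Then the monomials w₁ⁱ w₂ʲ w₃ᵐ for i,j,m ∈ ℕ form a ℂ-basis of S_q(V). -/
/-! `S_q(V)` acts on the vector space with basis `e_{i,j,m}`, `(i, j, m) ∈ ℕ³`, by letting `w₁, w₂, w₃`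
raise the corresponding exponent, `w₁` with the extra factor `q^{j+m}`; these operators satisfy the
defining relations. Applied to `e_{0,0,0}`, the monomial `w₁ⁱ w₂ʲ w₃ᵐ` gives `q^{i(j+m)} e_{i,j,m}`, so the
monomials are linearly independent. They span because, `q` being invertible, the relations move any
generator past a normal-ordered monomial at the cost of a power of `q⁻¹`. -/

/-- The defining relations of the quantum symmetric algebra `S_q(V)` of the motivational
example: `w₁w₂ = q w₂w₁`, `w₁w₃ = q w₃w₁`, `w₂w₃ = w₃w₂` (with `q₁₂ = q₁₃ = q`, `q₂₃ = 1`). -/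
inductive SqRel (q : ℂ) : FreeAlgebra ℂ (Fin 3) → FreeAlgebra ℂ (Fin 3) → Prop
  | r12 : SqRel q (FreeAlgebra.ι ℂ 0 * FreeAlgebra.ι ℂ 1) (q • (FreeAlgebra.ι ℂ 1 * FreeAlgebra.ι ℂ 0))
  | r13 : SqRel q (FreeAlgebra.ι ℂ 0 * FreeAlgebra.ι ℂ 2) (q • (FreeAlgebra.ι ℂ 2 * FreeAlgebra.ι ℂ 0))
  | r23 : SqRel q (FreeAlgebra.ι ℂ 1 * FreeAlgebra.ι ℂ 2) (FreeAlgebra.ι ℂ 2 * FreeAlgebra.ι ℂ 1)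

theorem mul_pow_eq_smul_pow_mul_of_mul_eq_smul {R A : Type*} [CommSemiring R] [Semiring A]
    [Algebra R A] {a b : A} {c : R} (h : b * a = c • (a * b)) (k : ℕ) :
    b * a ^ k = c ^ k • (a ^ k * b) := by
  induction k with
  | zero => simp
  | succ k ih =>
    rw [pow_succ', ← mul_assoc, h, smul_mul_assoc, mul_assoc, ih, mul_smul_comm, smul_smul,
      ← mul_assoc, ← pow_succ', pow_succ']

noncomputable section

namespace QuantumSymmetricAlgebra

abbrev E := (ℕ × ℕ × ℕ) →₀ ℂ

variable (q : ℂ)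

def raise₀ : Module.End ℂ E :=
  Finsupp.lift E ℂ (ℕ × ℕ × ℕ) fun p => q ^ (p.2.1 + p.2.2) • Finsupp.single (p.1 + 1, p.2.1, p.2.2) 1

def raise₁ : Module.End ℂ E :=
  Finsupp.lift E ℂ (ℕ × ℕ × ℕ) fun p => Finsupp.single (p.1, p.2.1 + 1, p.2.2) 1

def raise₂ : Module.End ℂ E :=
  Finsupp.lift E ℂ (ℕ × ℕ × ℕ) fun p => Finsupp.single (p.1, p.2.1, p.2.2 + 1) 1

@[simp] lemma raise₀_single (p : ℕ × ℕ × ℕ) (c : ℂ) :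
    raise₀ q (Finsupp.single p c) =
      (c * q ^ (p.2.1 + p.2.2)) • Finsupp.single (p.1 + 1, p.2.1, p.2.2) 1 := by
  simp [raise₀, mul_smul]

@[simp] lemma raise₁_single (p : ℕ × ℕ × ℕ) (c : ℂ) :
    raise₁ (Finsupp.single p c) = c • Finsupp.single (p.1, p.2.1 + 1, p.2.2) 1 := by
  simp [raise₁]

@[simp] lemma raise₂_single (p : ℕ × ℕ × ℕ) (c : ℂ) :
    raise₂ (Finsupp.single p c) = c • Finsupp.single (p.1, p.2.1, p.2.2 + 1) 1 := by
  simp [raise₂]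

lemma raise₀_mul_raise₁ : raise₀ q * raise₁ = q • (raise₁ * raise₀ q) := by
  refine Finsupp.lhom_ext fun p c => ?_
  simp only [Module.End.mul_apply, LinearMap.smul_apply, raise₀_single, raise₁_single, map_smul,
    smul_smul]
  ring_nf

lemma raise₀_mul_raise₂ : raise₀ q * raise₂ = q • (raise₂ * raise₀ q) := by
  refine Finsupp.lhom_ext fun p c => ?_
  simp only [Module.End.mul_apply, LinearMap.smul_apply, raise₀_single, raise₂_single, map_smul,
    smul_smul]
  ring_nf

lemma raise₁_mul_raise₂ : raise₁ * raise₂ = raise₂ * raise₁ := by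
  refine Finsupp.lhom_ext fun p c => ?_
  simp only [Module.End.mul_apply, raise₁_single, raise₂_single, map_smul, smul_smul]

lemma raise₀_pow_single_one (k : ℕ) (p : ℕ × ℕ × ℕ) :
    (raise₀ q ^ k) (Finsupp.single p 1) =
      q ^ (k * (p.2.1 + p.2.2)) • Finsupp.single (p.1 + k, p.2.1, p.2.2) 1 := by
  induction k generalizing p with
  | zero => simp
  | succ k ih =>
    rw [pow_succ, Module.End.mul_apply, raise₀_single, one_mul, map_smul, ih, smul_smul, ← pow_add]
    congr 3 <;> ring

lemma raise₁_pow_single_one (k : ℕ) (p : ℕ × ℕ × ℕ) :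
    (raise₁ ^ k) (Finsupp.single p 1) = Finsupp.single (p.1, p.2.1 + k, p.2.2) 1 := by
  induction k generalizing p with
  | zero => simp
  | succ k ih =>
    rw [pow_succ, Module.End.mul_apply, raise₁_single, one_smul, ih]
    ring_nf

lemma raise₂_pow_single_one (k : ℕ) (p : ℕ × ℕ × ℕ) :
    (raise₂ ^ k) (Finsupp.single p 1) = Finsupp.single (p.1, p.2.1, p.2.2 + k) 1 := by
  induction k generalizing p with
  | zero => simp
  | succ k ih =>
    rw [pow_succ, Module.End.mul_apply, raise₂_single, one_smul, ih]
    ring_nf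

def freeRep : FreeAlgebra ℂ (Fin 3) →ₐ[ℂ] Module.End ℂ E :=
  FreeAlgebra.lift ℂ ![raise₀ q, raise₁, raise₂]

lemma freeRep_eq_of_sqRel ⦃a b : FreeAlgebra ℂ (Fin 3)⦄ (h : SqRel q a b) :
    freeRep q a = freeRep q b := by
  cases h with
  | r12 => simp [freeRep, raise₀_mul_raise₁]
  | r13 => simp [freeRep, raise₀_mul_raise₂]
  | r23 => simp [freeRep, raise₁_mul_raise₂]

def rep : RingQuot (SqRel q) →ₐ[ℂ] Module.End ℂ E :=
  RingQuot.liftAlgHom ℂ ⟨freeRep q, freeRep_eq_of_sqRel q⟩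

abbrev w (i : Fin 3) : RingQuot (SqRel q) := RingQuot.mkAlgHom ℂ (SqRel q) (FreeAlgebra.ι ℂ i)

lemma rep_w (i : Fin 3) : rep q (w q i) = ![raise₀ q, raise₁, raise₂] i := by
  simp [rep, RingQuot.liftAlgHom_mkAlgHom_apply, freeRep]

def monomial (p : ℕ × ℕ × ℕ) : RingQuot (SqRel q) := w q 0 ^ p.1 * w q 1 ^ p.2.1 * w q 2 ^ p.2.2

lemma monomial_eq_mkAlgHom (p : ℕ × ℕ × ℕ) :
    monomial q p = RingQuot.mkAlgHom ℂ (SqRel q)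
      (FreeAlgebra.ι ℂ 0 ^ p.1 * FreeAlgebra.ι ℂ 1 ^ p.2.1 * FreeAlgebra.ι ℂ 2 ^ p.2.2) := by
  simp [monomial]

lemma monomial_zero : monomial q 0 = 1 := by
  simp [monomial]

def evalVacuum : RingQuot (SqRel q) →ₗ[ℂ] E :=
  LinearMap.applyₗ (Finsupp.single 0 1) ∘ₗ (rep q).toLinearMap

lemma evalVacuum_monomial (p : ℕ × ℕ × ℕ) :
    evalVacuum q (monomial q p) = q ^ (p.1 * (p.2.1 + p.2.2)) • Finsupp.single p 1 := by
  have hrep : rep q (monomial q p) = raise₀ q ^ p.1 * raise₁ ^ p.2.1 * raise₂ ^ p.2.2 := by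
    simp [monomial, rep_w]
  simp only [evalVacuum, LinearMap.coe_comp, Function.comp_apply, AlgHom.toLinearMap_apply,
    LinearMap.applyₗ_apply_apply, hrep, Module.End.mul_apply, raise₂_pow_single_one,
    raise₁_pow_single_one, raise₀_pow_single_one]
  simp

variable {q}

lemma linearIndependent_monomial (hq : q ≠ 0) : LinearIndependent ℂ (monomial q) := by
  let u : ℕ × ℕ × ℕ → ℂˣ := fun p => Units.mk0 (q ^ (p.1 * (p.2.1 + p.2.2))) (pow_ne_zero _ hq)
  refine LinearIndependent.of_comp (evalVacuum q) ?_
  convert (Finsupp.basisSingleOne (R := ℂ) (ι := ℕ × ℕ × ℕ)).linearIndependent.units_smul u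
  ext1 p
  simp [evalVacuum_monomial, u, Units.smul_def]

lemma w_one_mul_w_zero (hq : q ≠ 0) : w q 1 * w q 0 = q⁻¹ • (w q 0 * w q 1) := by
  rw [eq_inv_smul_iff₀ hq, ← map_mul, ← map_mul, ← map_smul]
  exact (RingQuot.mkAlgHom_rel ℂ SqRel.r12).symm

lemma w_two_mul_w_zero (hq : q ≠ 0) : w q 2 * w q 0 = q⁻¹ • (w q 0 * w q 2) := by
  rw [eq_inv_smul_iff₀ hq, ← map_mul, ← map_mul, ← map_smul]
  exact (RingQuot.mkAlgHom_rel ℂ SqRel.r13).symm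

lemma commute_w_one_w_two : Commute (w q 1) (w q 2) := by
  rw [Commute, SemiconjBy, ← map_mul, ← map_mul]
  exact RingQuot.mkAlgHom_rel ℂ SqRel.r23

lemma w_zero_mul_monomial (p : ℕ × ℕ × ℕ) :
    w q 0 * monomial q p = monomial q (p.1 + 1, p.2.1, p.2.2) := by
  simp only [monomial, ← mul_assoc, ← pow_succ']

lemma w_one_mul_monomial (hq : q ≠ 0) (p : ℕ × ℕ × ℕ) :
    w q 1 * monomial q p = q⁻¹ ^ p.1 • monomial q (p.1, p.2.1 + 1, p.2.2) := by
  simp only [monomial, ← mul_assoc,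
    mul_pow_eq_smul_pow_mul_of_mul_eq_smul (w_one_mul_w_zero hq), smul_mul_assoc]
  rw [mul_assoc (w q 0 ^ p.1), ← pow_succ']

lemma w_two_mul_monomial (hq : q ≠ 0) (p : ℕ × ℕ × ℕ) :
    w q 2 * monomial q p = q⁻¹ ^ p.1 • monomial q (p.1, p.2.1, p.2.2 + 1) := by
  simp only [monomial, ← mul_assoc,
    mul_pow_eq_smul_pow_mul_of_mul_eq_smul (w_two_mul_w_zero hq), smul_mul_assoc]
  rw [mul_assoc (w q 0 ^ p.1), (commute_w_one_w_two.symm.pow_right p.2.1).eq, ← mul_assoc,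
    mul_assoc _ (w q 2), ← pow_succ']

lemma w_mul_mem_span_monomial (hq : q ≠ 0) (i : Fin 3) {s : RingQuot (SqRel q)}
    (hs : s ∈ Submodule.span ℂ (Set.range (monomial q))) :
    w q i * s ∈ Submodule.span ℂ (Set.range (monomial q)) := by
  set S := Submodule.span ℂ (Set.range (monomial q))
  have hmem (p) : monomial q p ∈ S := Submodule.subset_span ⟨p, rfl⟩
  induction hs using Submodule.span_induction with
  | mem t ht =>
    obtain ⟨p, rfl⟩ := ht
    fin_cases i
    · exact w_zero_mul_monomial p ▸ hmem _
    · exact w_one_mul_monomial hq p ▸ S.smul_mem _ (hmem _)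
    · exact w_two_mul_monomial hq p ▸ S.smul_mem _ (hmem _)
  | zero => simp
  | add a b _ _ ha hb => simpa [mul_add] using S.add_mem ha hb
  | smul c a _ ha => simpa [mul_smul_comm] using S.smul_mem c ha

lemma span_monomial_eq_top (hq : q ≠ 0) : Submodule.span ℂ (Set.range (monomial q)) = ⊤ := by
  set S := Submodule.span ℂ (Set.range (monomial q))
  have hmul (a : FreeAlgebra ℂ (Fin 3)) : ∀ s ∈ S, RingQuot.mkAlgHom ℂ (SqRel q) a * s ∈ S := by
    induction a using FreeAlgebra.induction with
    | grade0 r => simpa [← Algebra.smul_def] using fun s hs => S.smul_mem r hs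
    | grade1 i => exact fun s => w_mul_mem_span_monomial hq i
    | mul a b ha hb => exact fun s hs => by simpa [mul_assoc] using ha _ (hb s hs)
    | add a b ha hb => exact fun s hs => by simpa [add_mul] using S.add_mem (ha s hs) (hb s hs)
  refine eq_top_iff.mpr fun x _ => ?_
  obtain ⟨a, rfl⟩ := RingQuot.mkAlgHom_surjective ℂ (SqRel q) x
  simpa using hmul a 1 (monomial_zero q ▸ Submodule.subset_span ⟨0, rfl⟩)

end QuantumSymmetricAlgebra

end

open QuantumSymmetricAlgebra in
/-- Let `V` be 3-dimensional over `ℂ` with basis `w₁, w₂, w₃` and `q` a primitive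
`n`th root of unity (`n ≥ 2`). In `S_q(V) = T(V)/(w₁w₂ − q w₂w₁, w₁w₃ − q w₃w₁, w₂w₃ − w₃w₂)`
the monomials `w₁ⁱ w₂ʲ w₃ᵐ` (`i,j,m ∈ ℕ`) form a `ℂ`-basis. -/
theorem quantum_symmetric_algebra_monomial_basis
    (n : ℕ) (hn : 2 ≤ n) (q : ℂ) (hq : IsPrimitiveRoot q n) :
    ∃ B : Module.Basis (ℕ × ℕ × ℕ) ℂ (RingQuot (SqRel q)),
      ∀ i j m : ℕ, B (i, j, m) =
        RingQuot.mkAlgHom ℂ (SqRel q)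
          (FreeAlgebra.ι ℂ 0 ^ i * FreeAlgebra.ι ℂ 1 ^ j * FreeAlgebra.ι ℂ 2 ^ m) := by
  have hq0 : q ≠ 0 := hq.ne_zero (by omega)
  refine ⟨.mk (linearIndependent_monomial hq0) (span_monomial_eq_top hq0).ge, fun i j m => ?_⟩
  rw [Module.Basis.mk_apply, monomial_eq_mkAlgHom]
end

section
/- Let A = S_q(V)#G be as in the motivational example with dim V = 3, G = ⟨σ₁,σ₂ | σ₁ⁿ = σ₂ⁿ = 1, σ₁σ₂ = σ₂σ₁⟩ acting diagonally via σ₁(w₁) = qw₁, σ₁(w₂) = w₂, σ₁(w₃) = qw₃, σ₂(w₁) = w₁, σ₂(w₂) = qw₂, σ₂(w₃) = qw₃. Define k-linear maps on A by σ(w₁ⁱw₂ʲw₃ᵐ g) = qⁱ χ₁(g⁻¹) w₁ⁱw₂ʲw₃ᵐ g, D₁(w₁ⁱw₂ʲw₃ᵐ g) = (i)_q q^{j+m} χ₁(g⁻¹) w₁^{i−1}w₂ʲw₃ᵐ σ₂ g, D₂(w₁ⁱw₂ʲw₃ᵐ g) = (j)_{q⁻¹} qⁱ w₁ⁱw₂^{j−1}w₃^{m+1}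 σ₁σ₂⁻¹ g. Then D₁ D₂ = D₂ D₁ as linear maps on A. -/
/-! Both composites send `w₁ⁱw₂ʲw₃ᵐ σ₁ᵃσ₂ᵇ` to a multiple of `w₁^(i−1)w₂^(j−1)w₃^(m+1) σ₁^(a+1)σ₂ᵇ`.
Applying `D₂` first contributes one extra factor `q` (from `qⁱ` instead of `q^(i−1)`), and
`D₁` then sees `σ₁ g` instead of `g`; these cancel because `χ₁(g⁻¹) = q χ₁((σ₁g)⁻¹)` when
`qⁿ = 1`. -/

/-- The underlying vector space of `S_q(V)#G` in the motivational example: it has basis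
`{w₁ⁱ w₂ʲ w₃ᵐ g}` indexed by `(i,j,m) ∈ ℕ³` and `g = σ₁^a σ₂^b ∈ G = (ℤ/n)²`. -/
abbrev SmashSpace (n : ℕ) := (ℕ × ℕ × ℕ × (ZMod n × ZMod n)) →₀ ℂ

/-- The quantum integer `(m)_q = 1 + q + ⋯ + q^(m−1)`. -/
noncomputable def qInt (q : ℂ) (m : ℕ) : ℂ := ∑ i ∈ Finset.range m, q ^ i

/-- The character `χ₁ : G → ℂˣ` evaluated at `g⁻¹`, for `g = σ₁^a σ₂^b`: since
`σ₁(w₁) = q w₁` and `σ₂(w₁) = w₁`, we have `χ₁(g) = q^a`, so `χ₁(g⁻¹) = q^((−a).val)`. -/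
noncomputable def chi1inv (n : ℕ) (q : ℂ) (g : ZMod n × ZMod n) : ℂ := q ^ (-g.1).val

/-- `D₁` on basis elements: `D₁(w₁ⁱw₂ʲw₃ᵐ g) = (i)_q q^(j+m) χ₁(g⁻¹) w₁^(i−1)w₂ʲw₃ᵐ σ₂ g`
(a negative exponent is interpreted as `0`; indeed `(0)_q = 0`). -/
noncomputable def D1fun (n : ℕ) (q : ℂ) :
    ℕ × ℕ × ℕ × (ZMod n × ZMod n) → SmashSpace n
  | (i, j, m, (a, b)) =>
      (qInt q i * q ^ (j + m) * chi1inv n q (a, b)) •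
        Finsupp.single (i - 1, j, m, (a, b + 1)) 1

/-- `D₂` on basis elements: `D₂(w₁ⁱw₂ʲw₃ᵐ g) = (j)_{q⁻¹} qⁱ w₁ⁱw₂^(j−1)w₃^(m+1) σ₁σ₂⁻¹ g`. -/
noncomputable def D2fun (n : ℕ) (q : ℂ) :
    ℕ × ℕ × ℕ × (ZMod n × ZMod n) → SmashSpace n
  | (i, j, m, (a, b)) =>
      (qInt q⁻¹ j * q ^ i) • Finsupp.single (i, j - 1, m + 1, (a + 1, b - 1)) 1

/-- `σ` on basis elements: `σ(w₁ⁱw₂ʲw₃ᵐ g) = qⁱ χ₁(g⁻¹) w₁ⁱw₂ʲw₃ᵐ g`. -/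
noncomputable def sigmafun (n : ℕ) (q : ℂ) :
    ℕ × ℕ × ℕ × (ZMod n × ZMod n) → SmashSpace n
  | (i, j, m, (a, b)) =>
      (q ^ i * chi1inv n q (a, b)) • Finsupp.single (i, j, m, (a, b)) 1

/-- The `ℂ`-linear extension of a map defined on the monomial basis. -/
noncomputable def extend (n : ℕ)
    (f : ℕ × ℕ × ℕ × (ZMod n × ZMod n) → SmashSpace n) :
    SmashSpace n →ₗ[ℂ] SmashSpace n :=
  Finsupp.lsum ℂ fun p => LinearMap.toSpanSingleton ℂ (SmashSpace n) (f p)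

lemma extend_single (n : ℕ)
    (f : ℕ × ℕ × ℕ × (ZMod n × ZMod n) → SmashSpace n)
    (p : ℕ × ℕ × ℕ × (ZMod n × ZMod n)) (c : ℂ) :
    extend n f (Finsupp.single p c) = c • f p := by
  simp [extend, LinearMap.toSpanSingleton_apply]

lemma pow_zmod_val_add {M : Type*} [Monoid M] {n : ℕ} [NeZero n] {q : M} (hq : q ^ n = 1)
    (x y : ZMod n) : q ^ (x + y).val = q ^ x.val * q ^ y.val := by
  rw [ZMod.val_add, ← pow_eq_pow_mod _ hq, pow_add]

lemma pow_zmod_val_one {M : Type*} [Monoid M] {n : ℕ} {q : M} (hq : q ^ n = 1) :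
    q ^ (1 : ZMod n).val = q := by
  rw [ZMod.val_one_eq_one_mod, ← pow_eq_pow_mod _ hq, pow_one]

lemma chi1inv_eq_mul_chi1inv_add_one {n : ℕ} [NeZero n] {q : ℂ} (hq : q ^ n = 1)
    (a b b' : ZMod n) : chi1inv n q (a, b) = q * chi1inv n q (a + 1, b') := by
  have hneg : -a = -(a + 1) + 1 := by ring
  rw [chi1inv, chi1inv, hneg, pow_zmod_val_add hq, pow_zmod_val_one hq, mul_comm]

section Composites

variable (n : ℕ) (q : ℂ) (i j m : ℕ) (a b : ZMod n)

lemma extend_D1fun_D2fun :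
    extend n (D1fun n q) (D2fun n q (i, j, m, (a, b))) =
      (qInt q⁻¹ j * q ^ i * (qInt q i * q ^ (j - 1 + (m + 1)) * chi1inv n q (a + 1, b - 1))) •
        Finsupp.single (i - 1, j - 1, m + 1, (a + 1, b)) 1 := by
  simp only [D2fun, map_smul, extend_single, D1fun, one_mul, smul_smul, sub_add_cancel]

lemma extend_D2fun_D1fun :
    extend n (D2fun n q) (D1fun n q (i, j, m, (a, b))) =
      (qInt q i * q ^ (j + m) * chi1inv n q (a, b) * (qInt q⁻¹ j * q ^ (i - 1))) •
        Finsupp.single (i - 1, j - 1, m + 1, (a + 1, b)) 1 := by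
  simp only [D1fun, map_smul, extend_single, D2fun, one_mul, smul_smul, add_sub_cancel_right]

end Composites

/-- In the motivational example (`dim V = 3`, `q` a primitive `n`th root of unity,
`G = (ℤ/n)²` acting diagonally), the linear maps `D₁` and `D₂` defined on the basis
`{w₁ⁱ w₂ʲ w₃ᵐ g}` by the stated formulas commute: `D₁ D₂ = D₂ D₁`. -/
theorem motivational_D1_D2_commute
    (n : ℕ) (hn : 2 ≤ n) (q : ℂ) (hq : IsPrimitiveRoot q n) :
    (extend n (D1fun n q)) ∘ₗ (extend n (D2fun n q)) =
      (extend n (D2fun n q)) ∘ₗ (extend n (D1fun n q)) := by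
  have : NeZero n := ⟨by omega⟩
  apply Finsupp.lhom_ext
  rintro ⟨i, j, m, a, b⟩ c
  simp only [LinearMap.comp_apply, extend_single, map_smul, extend_D1fun_D2fun,
    extend_D2fun_D1fun]
  congr 2
  rcases i with _ | i
  · simp [qInt]
  rcases j with _ | j
  · simp [qInt]
  rw [chi1inv_eq_mul_chi1inv_add_one hq.pow_eq_one a b (b - 1), add_tsub_cancel_right,
    add_tsub_cancel_right]
  ring
end

section
/- Let A be an associative algebra over k[[t]]-coefficients A[[t]] with new multiplication a*b = ab + t·D₁(a)D₂(b), where σ is an automorphism of A, D₁ is a (σ,1)-skew derivation, D₂ is a (1,σ)-skew derivation, D₁D₂ = D₂D₁, (−1)·σD᷉ᵢ = Dᵢσ (i.e. q = −1), and D₁² = D₂² = 0. Then * is associative. -/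
/-!
Both sides of the associativity identity equal `xyz` plus terms of order `t` and `t²`. In order
`t` they agree because `d₁` and `d₂` obey Leibniz rules twisted by the same `s` on opposite
factors, so that `d₁(xy) d₂z` and `d₁x d₂(yz)` share the term `d₁x · s y · d₂z`. In order `t²`,
`d₁² = d₂² = 0` leaves `d₁x · d₁d₂y · d₂z` on one side and `d₁x · d₂d₁y · d₂z` on the other.
Twisted derivations of `A` extend coefficientwise to `A[[t]]`, commuting with multiplication
by the central element `t`.
-/

namespace PowerSeries

variable {R S : Type*} [Semiring R] [Semiring S]

noncomputable def mapAddMonoidHom (φ : R →+ S) : R⟦X⟧ →+ S⟦X⟧ where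
  toFun f := mk fun n => φ (coeff n f)
  map_zero' := by ext; simp
  map_add' f g := by ext; simp

@[simp]
theorem coeff_mapAddMonoidHom (φ : R →+ S) (f : R⟦X⟧) (n : ℕ) :
    coeff n (mapAddMonoidHom φ f) = φ (coeff n f) :=
  coeff_mk n fun n => φ (coeff n f)

theorem mapAddMonoidHom_X_mul (φ : R →+ S) (f : R⟦X⟧) :
    mapAddMonoidHom φ (X * f) = X * mapAddMonoidHom φ f := by
  ext n
  cases n <;> simp [coeff_succ_X_mul]

end PowerSeries

section TwistedDerivation

variable {R : Type*} [Semiring R]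

def IsTwistedDerivationRight (s d : R →+ R) : Prop :=
  ∀ a b, d (a * b) = d a * s b + a * d b

def IsTwistedDerivationLeft (s d : R →+ R) : Prop :=
  ∀ a b, d (a * b) = d a * b + s a * d b

open PowerSeries

theorem IsTwistedDerivationRight.mapAddMonoidHom {s d : R →+ R}
    (hd : IsTwistedDerivationRight s d) :
    IsTwistedDerivationRight (mapAddMonoidHom s) (mapAddMonoidHom d) := by
  intro f g
  ext n
  simp [coeff_mul, map_sum, hd _ _, Finset.sum_add_distrib]

theorem IsTwistedDerivationLeft.mapAddMonoidHom {s d : R →+ R}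
    (hd : IsTwistedDerivationLeft s d) :
    IsTwistedDerivationLeft (mapAddMonoidHom s) (mapAddMonoidHom d) := by
  intro f g
  ext n
  simp [coeff_mul, map_sum, hd _ _, Finset.sum_add_distrib]

end TwistedDerivation

section DeformedMul

variable {R : Type*} [Semiring R]

def deformedMul (t : R) (d₁ d₂ : R →+ R) (x y : R) : R :=
  x * y + t * (d₁ x * d₂ y)

theorem deformedMul_assoc {t : R} {s d₁ d₂ : R →+ R} (ht : ∀ x, Commute t x)
    (h₁ : IsTwistedDerivationRight s d₁) (h₂ : IsTwistedDerivationLeft s d₂)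
    (h₁t : ∀ x, d₁ (t * x) = t * d₁ x) (h₂t : ∀ x, d₂ (t * x) = t * d₂ x)
    (hcomm : ∀ x, d₁ (d₂ x) = d₂ (d₁ x))
    (hsq₁ : ∀ x, d₁ (d₁ x) = 0) (hsq₂ : ∀ x, d₂ (d₂ x) = 0) (x y z : R) :
    deformedMul t d₁ d₂ (deformedMul t d₁ d₂ x y) z =
      deformedMul t d₁ d₂ x (deformedMul t d₁ d₂ y z) := by
  have ht' : ∀ a b, a * (t * b) = t * (a * b) := fun a b => ((ht a).left_comm b).symm
  -- `t`-linearity first: the Leibniz rules would also split `d (t * _)`.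
  simp only [deformedMul, map_add, h₁t, h₂t]
  simp only [h₁ _ _, h₂ _ _, hsq₁, hsq₂, hcomm]
  simp only [zero_mul, mul_zero, add_zero, zero_add, mul_add, add_mul, mul_assoc, ht']
  abel

end DeformedMul

open PowerSeries in
theorem deformed_multiplication_associative_general
    (k : Type*) [Field k]
    (A : Type*) [Ring A] [Algebra k A]
    (σ : A ≃ₐ[k] A) (D₁ D₂ : A →ₗ[k] A)
    (hD₁ : ∀ a b : A, D₁ (a * b) = D₁ a * σ b + a * D₁ b)
    (hD₂ : ∀ a b : A, D₂ (a * b) = D₂ a * b + σ a * D₂ b)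
    (hcomm : ∀ a : A, D₁ (D₂ a) = D₂ (D₁ a))
    (hsq1 : ∀ a : A, D₁ (D₁ a) = 0)
    (hsq2 : ∀ a : A, D₂ (D₂ a) = 0) :
    let star : PowerSeries A → PowerSeries A → PowerSeries A := fun f g =>
      f * g + PowerSeries.X *
        ((PowerSeries.mk fun i => D₁ (PowerSeries.coeff i f)) *
          (PowerSeries.mk fun i => D₂ (PowerSeries.coeff i g)))
    ∀ f g h : PowerSeries A, star (star f g) h = star f (star g h) := by
  intro star f g h
  have h₁ : IsTwistedDerivationRight (σ : A →+ A) D₁.toAddMonoidHom := hD₁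
  have h₂ : IsTwistedDerivationLeft (σ : A →+ A) D₂.toAddMonoidHom := hD₂
  exact deformedMul_assoc (t := X) (fun f => (commute_X f).symm) h₁.mapAddMonoidHom
    h₂.mapAddMonoidHom (mapAddMonoidHom_X_mul _) (mapAddMonoidHom_X_mul _)
    (fun f => by ext; simp [hcomm]) (fun f => by ext; simp [hsq1]) (fun f => by ext; simp [hsq2])
    f g h

/-- Let `A` be an associative algebra, `σ` an automorphism, `D₁` a `(σ,1)`-skew
derivation, `D₂` a `(1,σ)`-skew derivation with `D₁D₂ = D₂D₁`, `−σDᵢ = Dᵢσ` (the case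
`q = −1`), and `D₁² = D₂² = 0`. Then the multiplication `a*b = ab + t·D₁(a)D₂(b)` on `A[[t]]`
(extended `t`-linearly) is associative. -/
theorem deformed_multiplication_associative
    (k : Type*) [Field k] [CharZero k]
    (A : Type*) [Ring A] [Algebra k A]
    (σ : A ≃ₐ[k] A) (D₁ D₂ : A →ₗ[k] A)
    (hD₁ : ∀ a b : A, D₁ (a * b) = D₁ a * σ b + a * D₁ b)
    (hD₂ : ∀ a b : A, D₂ (a * b) = D₂ a * b + σ a * D₂ b)
    (hcomm : ∀ a : A, D₁ (D₂ a) = D₂ (D₁ a))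
    (hq1 : ∀ a : A, -(σ (D₁ a)) = D₁ (σ a))
    (hq2 : ∀ a : A, -(σ (D₂ a)) = D₂ (σ a))
    (hsq1 : ∀ a : A, D₁ (D₁ a) = 0)
    (hsq2 : ∀ a : A, D₂ (D₂ a) = 0) :
    let star : PowerSeries A → PowerSeries A → PowerSeries A := fun f g =>
      f * g + PowerSeries.X *
        ((PowerSeries.mk fun i => D₁ (PowerSeries.coeff i f)) *
          (PowerSeries.mk fun i => D₂ (PowerSeries.coeff i g)))
    ∀ f g h : PowerSeries A, star (star f g) h = star f (star g h) :=
  deformed_multiplication_associative_general k A σ D₁ D₂ hD₁ hD₂ hcomm hsq1 hsq2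
end

section
/- Let A be an associative unital k-algebra, σ an algebra automorphism, D₁ a (σ,1)-skew derivation and D₂ a (1,σ)-skew derivation with D₁D₂ = D₂D₁ and qσDᵢ = Dᵢσ for i = 1,2, and assume q is a primitive nth root of unity with D₁ⁿ = D₂ⁿ = 0. Then the map μ₁ = m∘(D₁⊗D₂) : A⊗A → A is a Hochschild 2-cocycle: a·μ₁(b⊗c) − μ₁(ab⊗c) + μ₁(a⊗bc) − μ₁(a⊗b)·c = 0 for all a,b,c ∈ A. -/
def IsHochschildTwoCocycle {A : Type*} [NonUnitalRing A] (f : A → A → A) : Prop :=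
  ∀ a b c : A, a * f b c - f (a * b) c + f a (b * c) - f a b * c = 0

/-- The twists are placed so that the term `D₁ a * σ b * D₂ c` coming from `D₁ (a * b)`
cancels the one coming from `D₂ (b * c)`. -/
theorem isHochschildTwoCocycle_mul_of_skew_leibniz {A : Type*} [NonUnitalRing A]
    (σ D₁ D₂ : A → A)
    (hD₁ : ∀ a b : A, D₁ (a * b) = D₁ a * σ b + a * D₁ b)
    (hD₂ : ∀ a b : A, D₂ (a * b) = D₂ a * b + σ a * D₂ b) :
    IsHochschildTwoCocycle fun a b => D₁ a * D₂ b := by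
  intro a b c
  beta_reduce
  rw [hD₁, hD₂]
  noncomm_ring

theorem infinitesimal_is_hochschild_two_cocycle_general
    (k : Type*) [Field k]
    (A : Type*) [Ring A] [Algebra k A]
    (σ : A ≃ₐ[k] A) (D₁ D₂ : Module.End k A)
    (hD₁ : ∀ a b : A, D₁ (a * b) = D₁ a * σ b + a * D₁ b)
    (hD₂ : ∀ a b : A, D₂ (a * b) = D₂ a * b + σ a * D₂ b) :
    ∀ a b c : A,
      a * (D₁ b * D₂ c) - D₁ (a * b) * D₂ c + D₁ a * D₂ (b * c) - (D₁ a * D₂ b) * c = 0 :=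
  isHochschildTwoCocycle_mul_of_skew_leibniz σ D₁ D₂ hD₁ hD₂

/-- Let `A` be an associative unital `k`-algebra, `σ` an algebra automorphism,
`D₁` a `(σ,1)`-skew derivation and `D₂` a `(1,σ)`-skew derivation with `D₁D₂ = D₂D₁` and
`qσDᵢ = Dᵢσ`, where `q` is a primitive `n`th root of unity and `D₁ⁿ = D₂ⁿ = 0`. Then
`μ₁ = m∘(D₁⊗D₂)` is a Hochschild 2-cocycle:
`a·μ₁(b⊗c) − μ₁(ab⊗c) + μ₁(a⊗bc) − μ₁(a⊗b)·c = 0`. -/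
theorem infinitesimal_is_hochschild_two_cocycle
    (k : Type*) [Field k] [CharZero k]
    (n : ℕ) (hn : 2 ≤ n) (q : k) (hq : IsPrimitiveRoot q n)
    (A : Type*) [Ring A] [Algebra k A]
    (σ : A ≃ₐ[k] A) (D₁ D₂ : Module.End k A)
    (hD₁ : ∀ a b : A, D₁ (a * b) = D₁ a * σ b + a * D₁ b)
    (hD₂ : ∀ a b : A, D₂ (a * b) = D₂ a * b + σ a * D₂ b)
    (hcomm : D₁ * D₂ = D₂ * D₁)
    (hq1 : q • (σ.toLinearMap ∘ₗ (D₁ : A →ₗ[k] A)) = (D₁ : A →ₗ[k] A) ∘ₗ σ.toLinearMap)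
    (hq2 : q • (σ.toLinearMap ∘ₗ (D₂ : A →ₗ[k] A)) = (D₂ : A →ₗ[k] A) ∘ₗ σ.toLinearMap)
    (hn1 : D₁ ^ n = 0) (hn2 : D₂ ^ n = 0) :
    ∀ a b c : A,
      a * (D₁ b * D₂ c) - D₁ (a * b) * D₂ c + D₁ a * D₂ (b * c) - (D₁ a * D₂ b) * c = 0 :=
  infinitesimal_is_hochschild_two_cocycle_general k A σ D₁ D₂ hD₁ hD₂
end
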